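/- arXiv:1402.1094 — 7 statements merged into one kernel-verified Lean document; each statement's English description precedes it below -/
import Mathlib

section
/- Let B be a skew-symmetrisable n×n integer matrix, Λ a skew-symmetric m×m matrix, and B̃ an m×n matrix with principal part B (top n×n block), such that B̃ᵀΛ = [D' 0] with D' diagonal with positive integer entries. Then D' is a skew-symmetriser for B, i.e. D'B is skew-symmetric. -/
/-- If `(B̃, Λ)` is a compatible pair with `B̃ᵀ Λ = [D' 0]`, then `D'` is a
skew-symmetriser of the principal part `B` of `B̃`, i.e. `D' * B` is skew-symmetric. -/
theorem compatible_pair_diagonal_is_skew_symmetriser (m n : ℕ) (hmn : n ≤ m)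
    (Bt : Matrix (Fin m) (Fin n) ℤ) (Λ : Matrix (Fin m) (Fin m) ℤ)
    (hΛ : Λ.transpose = -Λ)
    (d' : Fin n → ℤ) (hd' : ∀ i, 0 < d' i)
    (hcomp : ∀ (i : Fin n) (j : Fin m),
      (Bt.transpose * Λ) i j = if (j : ℕ) = (i : ℕ) then d' i else 0)
    (B : Matrix (Fin n) (Fin n) ℤ)
    (hB : ∀ i j : Fin n, B i j = Bt (Fin.castLE hmn i) j) :
    (Matrix.diagonal d' * B).transpose = -(Matrix.diagonal d' * B) := by
  have hM : Bt.transpose * Λ * Bt = Matrix.diagonal d' * B := by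
    ext i k
    rw [Matrix.mul_apply]
    simp only [hcomp]
    rw [Finset.sum_eq_single (Fin.castLE hmn i)]
    · simp [hB, Matrix.diagonal_mul]
    · intro j _ hj
      rw [if_neg, zero_mul]
      intro h
      exact hj (Fin.ext h)
    · simp
  have hskew : (Bt.transpose * Λ * Bt).transpose = -(Bt.transpose * Λ * Bt) := by
    rw [Matrix.transpose_mul, Matrix.transpose_mul, Matrix.transpose_transpose, hΛ]
    simp [Matrix.mul_assoc]
  rw [← hM]
  exact hskew
end

section
/- Let B̃ be an m×n rational matrix of full rank n whose principal part B (top n×n block) is skew-symmetrisable with skew-symmetriser D. Then there exists a skew-symmetric m×m integer matrix Λ and a positive rational λ such that B̃ᵀΛ = [λD 0], i.e. every full-rank exchange matrix admits a quantisation. -/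
open Matrix

/-- Clearing denominators: if the denominator of `q` divides `N`, then `N * q` is an integer. -/
lemma cast_num_mul_of_den_dvd (q : ℚ) (N : ℕ) (h : q.den ∣ N) :
    ((((N : ℚ) * q).num : ℤ) : ℚ) = (N : ℚ) * q := by
  obtain ⟨c, hc⟩ := h
  have hq : (N : ℚ) * q = ((c * q.num : ℤ) : ℚ) := by
    calc (N : ℚ) * q = ((q.den * c : ℕ) : ℚ) * ((q.num : ℚ) / q.den) := by
          rw [← hc, Rat.num_div_den]
      _ = ((c * q.num : ℤ) : ℚ) := by
          have hd0 : (q.den : ℚ) ≠ 0 := Nat.cast_ne_zero.mpr q.den_nz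
          push_cast
          field_simp
  rw [hq, Rat.num_intCast]

/-- Existence of quantisations: if the integer exchange matrix `B̃` has full rank `n`
and its principal part `B` is skew-symmetrisable with skew-symmetriser `D`, then
there is a skew-symmetric integer matrix `Λ` and a positive rational `λ` such that
`B̃ᵀ Λ = [λD 0]`. -/
theorem exists_quantisation (m n : ℕ) (hmn : n ≤ m)
    (Bt : Matrix (Fin m) (Fin n) ℤ)
    (hrank : (Bt.map ((↑) : ℤ → ℚ)).rank = n)
    (d : Fin n → ℤ) (hd : ∀ i, 0 < d i)
    (hskew : ∀ i j : Fin n,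
      d i * Bt (Fin.castLE hmn i) j = -(d j * Bt (Fin.castLE hmn j) i)) :
    ∃ (Λ : Matrix (Fin m) (Fin m) ℤ) (lam : ℚ), 0 < lam ∧ Λ.transpose = -Λ ∧
      ∀ (i : Fin n) (j : Fin m),
        ((Bt.map ((↑) : ℤ → ℚ)).transpose * Λ.map ((↑) : ℤ → ℚ)) i j =
          if (j : ℕ) = (i : ℕ) then lam * (d i : ℚ) else 0 := by
  classical
  set Aq : Matrix (Fin m) (Fin n) ℚ := Bt.map ((↑) : ℤ → ℚ) with hAqdef
  -- the linear map associated to `Aq` is injective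
  have hker : LinearMap.ker Aq.mulVecLin = ⊥ := by
    have h1 : Module.finrank ℚ (LinearMap.range Aq.mulVecLin)
        + Module.finrank ℚ (LinearMap.ker Aq.mulVecLin)
        = Module.finrank ℚ (Fin n → ℚ) := Aq.mulVecLin.finrank_range_add_finrank_ker
    have h2 : Module.finrank ℚ (Fin n → ℚ) = n := by simp
    have h3 : Module.finrank ℚ (LinearMap.range Aq.mulVecLin) = n := hrank
    have h4 : Module.finrank ℚ (LinearMap.ker Aq.mulVecLin) = 0 := by omega
    exact Submodule.finrank_eq_zero.mp h4
  -- a rational left inverse `C` of `Aq`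
  obtain ⟨g, hg⟩ := LinearMap.exists_leftInverse_of_injective Aq.mulVecLin hker
  set C : Matrix (Fin n) (Fin m) ℚ := LinearMap.toMatrix' g with hCdef
  have hCA : C * Aq = 1 := by
    have h1 : C * Aq = LinearMap.toMatrix' (g ∘ₗ Matrix.toLin' Aq) := by
      rw [LinearMap.toMatrix'_comp, LinearMap.toMatrix'_toLin', hCdef]
    rw [h1, Matrix.toLin'_apply', hg, LinearMap.toMatrix'_id]
  -- the matrix `E = -[D; 0]`
  set ι : Fin n → Fin m := Fin.castLE hmn with hιdef
  set E : Matrix (Fin m) (Fin n) ℚ :=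
    Matrix.of (fun i j => if i = ι j then -(d j : ℚ) else 0) with hEdef
  have hE : ∀ i j, E i j = if i = ι j then -(d j : ℚ) else 0 := fun i j => rfl
  -- `Aqᵀ * E` is skew-symmetric
  have hK : ∀ i j, (Aq.transpose * E) i j = -(d j : ℚ) * (Bt (ι j) i : ℚ) := by
    intro i j
    rw [Matrix.mul_apply]
    rw [Finset.sum_eq_single (ι j)]
    · simp [hE, hAqdef, mul_comm]
    · intro b _ hb
      simp [hE, hb]
    · simp
  have hKskew : (Aq.transpose * E).transpose = -(Aq.transpose * E) := by
    ext i j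
    simp only [Matrix.transpose_apply, Matrix.neg_apply, hK]
    have := hskew i j
    have h := congrArg (fun z : ℤ => (z : ℚ)) this
    push_cast at h ⊢
    linarith
  -- the rational quantisation matrix
  set Λq : Matrix (Fin m) (Fin m) ℚ :=
    E * C - C.transpose * E.transpose * (1 - Aq * C) with hΛqdef
  have hΛqskew : Λq.transpose = -Λq := by
    have hsum : Λq.transpose + Λq = 0 := by
      have expand : Λq.transpose + Λq =
          C.transpose * ((Aq.transpose * E) + (Aq.transpose * E).transpose) * C := by
        rw [hΛqdef]
        simp only [Matrix.transpose_sub, Matrix.transpose_mul, Matrix.transpose_one,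
          Matrix.transpose_transpose]
        noncomm_ring
        simp only [Matrix.add_mul, Matrix.mul_add, Matrix.mul_assoc]
      rw [expand, hKskew, add_neg_cancel, Matrix.mul_zero, Matrix.zero_mul]
    exact eq_neg_of_add_eq_zero_left hsum
  have hmulE : Λq * Aq = E := by
    have h1 : (1 - Aq * C) * Aq = 0 := by
      rw [Matrix.sub_mul, Matrix.one_mul, Matrix.mul_assoc, hCA, Matrix.mul_one, sub_self]
    rw [hΛqdef, Matrix.sub_mul, Matrix.mul_assoc, hCA, Matrix.mul_one,
      Matrix.mul_assoc (C.transpose * E.transpose), h1, Matrix.mul_zero, sub_zero]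
  have hfin : Aq.transpose * Λq = -E.transpose := by
    have h1 : Aq.transpose * Λq = (Λq.transpose * Aq).transpose := by
      rw [Matrix.transpose_mul, Matrix.transpose_transpose]
    rw [h1, hΛqskew, Matrix.neg_mul, hmulE, Matrix.transpose_neg]
  -- clear denominators
  set N : ℕ := ∏ i : Fin m, ∏ j : Fin m, (Λq i j).den with hNdef
  have hNdvd : ∀ i j : Fin m, (Λq i j).den ∣ N := by
    intro i j
    have h1 : (Λq i j).den ∣ ∏ j' : Fin m, (Λq i j').den :=
      Finset.dvd_prod_of_mem (fun j' => (Λq i j').den) (Finset.mem_univ j)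
    have h2 : (∏ j' : Fin m, (Λq i j').den) ∣ N :=
      Finset.dvd_prod_of_mem (fun i' => ∏ j' : Fin m, (Λq i' j').den) (Finset.mem_univ i)
    exact dvd_trans h1 h2
  have hNpos : 0 < N := by
    apply Finset.prod_pos
    intro i _
    apply Finset.prod_pos
    intro j _
    exact (Λq i j).pos
  set Λ : Matrix (Fin m) (Fin m) ℤ :=
    Matrix.of (fun i j => ((N : ℚ) * Λq i j).num) with hΛdef
  have hΛcast : ∀ i j, ((Λ i j : ℤ) : ℚ) = (N : ℚ) * Λq i j := by
    intro i j
    exact cast_num_mul_of_den_dvd (Λq i j) N (hNdvd i j)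
  have hmap : Λ.map ((↑) : ℤ → ℚ) = (N : ℚ) • Λq := by
    ext i j
    simp only [Matrix.map_apply, Matrix.smul_apply, smul_eq_mul]
    exact hΛcast i j
  refine ⟨Λ, (N : ℚ), by exact_mod_cast hNpos, ?_, ?_⟩
  · -- skew-symmetry of Λ
    ext i j
    have : ((Λ.transpose i j : ℤ) : ℚ) = (((-Λ) i j : ℤ) : ℚ) := by
      simp only [Matrix.transpose_apply, Matrix.neg_apply, Int.cast_neg]
      rw [hΛcast j i, hΛcast i j]
      have : Λq j i = -Λq i j := by
        have := congrFun (congrFun hΛqskew i) j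
        simpa [Matrix.transpose_apply, Matrix.neg_apply] using this
      rw [this]
      ring
    exact_mod_cast this
  · intro i j
    rw [hmap, Matrix.mul_smul]
    rw [hfin]
    simp only [Matrix.smul_apply, Matrix.neg_apply, Matrix.transpose_apply, smul_eq_mul, hE]
    have hiff : (j = ι i) ↔ ((j : ℕ) = (i : ℕ)) := by
      constructor
      · intro h; rw [h]; simp [hιdef]
      · intro h; apply Fin.ext; simpa [hιdef] using h
    by_cases hcase : (j : ℕ) = (i : ℕ)
    · rw [if_pos (hiff.mpr hcase), if_pos hcase]
      ring
    · rw [if_neg (fun h => hcase (hiff.mp h)), if_neg hcase]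
      ring
end

section
/- Let B̃ = [B; C] be an m×n matrix of full rank, extended to an invertible m×m matrix M = [B̃ Ẽ] where Ẽ = [E; F]. Let D be a skew-symmetriser of B. Then the matrix Λ₀ = M⁻ᵀ [[DB, DE], [−EᵀD, 0]] M⁻¹ is skew-symmetric and satisfies B̃ᵀΛ₀ = [D 0]. -/
/-!
`Λ₀` is a congruence transform of the skew-symmetric block matrix `N = [[DB, DE], [-EᵀD, 0]]`,
hence skew-symmetric. Since `B̃` is the first block column of `M`, we have `M⁻¹ B̃ = [1; 0]`,
so `B̃ᵀ Λ₀ = [1 0] N M⁻¹ = [DB DE] M⁻¹ = [D 0] M M⁻¹ = [D 0]`.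
-/

open Matrix

section

variable {R : Type*} [CommRing R] {m n l : Type*}

theorem Matrix.transpose_transpose_mul_mul_eq_neg [Fintype n] {N : Matrix n n R}
    (hN : Nᵀ = -N) (P : Matrix n l R) : (Pᵀ * N * P)ᵀ = -(Pᵀ * N * P) := by
  simp only [transpose_mul, transpose_transpose, hN, Matrix.mul_neg, Matrix.neg_mul,
    Matrix.mul_assoc]

theorem Matrix.fromBlocks_transpose_eq_neg {A : Matrix m m R} (hA : Aᵀ = -A)
    (X : Matrix m n R) : (fromBlocks A X (-Xᵀ) 0)ᵀ = -fromBlocks A X (-Xᵀ) 0 := by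
  simp [fromBlocks_transpose, fromBlocks_neg, hA]

variable [Fintype m] [Fintype n] [DecidableEq m] [DecidableEq n]

theorem Matrix.inv_mul_fromCols_left (P : Matrix (m ⊕ n) m R) (Q : Matrix (m ⊕ n) n R)
    (h : IsUnit (fromCols P Q).det) :
    (fromCols P Q)⁻¹ * P = fromRows (1 : Matrix m m R) (0 : Matrix n m R) := by
  calc (fromCols P Q)⁻¹ * P
      = (fromCols P Q)⁻¹ * (fromCols P Q * fromRows (1 : Matrix m m R) (0 : Matrix n m R)) := by
        simp [fromCols_mul_fromRows]
    _ = fromRows 1 0 := nonsing_inv_mul_cancel_left _ _ h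

theorem Matrix.transpose_mul_inv_transpose_fromCols_left (P : Matrix (m ⊕ n) m R)
    (Q : Matrix (m ⊕ n) n R) (h : IsUnit (fromCols P Q).det) :
    Pᵀ * (fromCols P Q)⁻¹ᵀ = fromCols (1 : Matrix m m R) (0 : Matrix m n R) := by
  rw [← transpose_mul, inv_mul_fromCols_left P Q h, transpose_fromRows, transpose_one,
    transpose_zero]

end

theorem quantisation_construction_general (n k : ℕ)
    (B : Matrix (Fin n) (Fin n) ℚ) (C : Matrix (Fin k) (Fin n) ℚ)
    (E : Matrix (Fin n) (Fin k) ℚ) (F : Matrix (Fin k) (Fin k) ℚ)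
    (d : Fin n → ℚ)
    (hskew : (Matrix.diagonal d * B).transpose = -(Matrix.diagonal d * B))
    (M : Matrix (Fin n ⊕ Fin k) (Fin n ⊕ Fin k) ℚ)
    (hM : M = Matrix.fromCols (Matrix.fromRows B C) (Matrix.fromRows E F))
    (hMunit : IsUnit M.det)
    (Λ₀ : Matrix (Fin n ⊕ Fin k) (Fin n ⊕ Fin k) ℚ)
    (hΛ₀ : Λ₀ = M⁻¹.transpose *
        Matrix.fromBlocks (Matrix.diagonal d * B) (Matrix.diagonal d * E)
          (-(E.transpose * Matrix.diagonal d)) 0 * M⁻¹) :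
    Λ₀.transpose = -Λ₀ ∧
      (Matrix.fromRows B C).transpose * Λ₀ =
        Matrix.fromCols (Matrix.diagonal d) 0 := by
  have hDE : E.transpose * diagonal d = (diagonal d * E).transpose := by
    simp [transpose_mul]
  rw [hDE] at hΛ₀
  set N := fromBlocks (diagonal d * B) (diagonal d * E) (-(diagonal d * E).transpose) 0
  subst hΛ₀
  refine ⟨transpose_transpose_mul_mul_eq_neg
    (fromBlocks_transpose_eq_neg hskew _) _, ?_⟩
  have hfirst : fromCols (1 : Matrix (Fin n) (Fin n) ℚ) (0 : Matrix (Fin n) (Fin k) ℚ) * N =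
      fromCols (diagonal d) (0 : Matrix (Fin n) (Fin k) ℚ) * M := by
    simp [N, hM, fromCols_mul_fromBlocks]
  calc (fromRows B C).transpose * (M⁻¹.transpose * N * M⁻¹)
      = (fromRows B C).transpose * M⁻¹.transpose * N * M⁻¹ := by
        simp only [Matrix.mul_assoc]
    _ = fromCols (diagonal d) (0 : Matrix (Fin n) (Fin k) ℚ) * M * M⁻¹ := by
        rw [hM, transpose_mul_inv_transpose_fromCols_left _ _ (hM ▸ hMunit), ← hM, hfirst]
    _ = fromCols (diagonal d) 0 := mul_nonsing_inv_cancel_right _ _ hMunit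

/-- With `B̃ = [B; C]` of full rank completed to an invertible matrix
`M = [B̃ Ẽ]`, `Ẽ = [E; F]`, and `D` a skew-symmetriser of `B`, the matrix
`Λ₀ = M⁻ᵀ [[DB, DE], [-EᵀD, 0]] M⁻¹` is skew-symmetric and satisfies
`B̃ᵀ Λ₀ = [D 0]`. -/
theorem quantisation_construction (n k : ℕ)
    (B : Matrix (Fin n) (Fin n) ℚ) (C : Matrix (Fin k) (Fin n) ℚ)
    (E : Matrix (Fin n) (Fin k) ℚ) (F : Matrix (Fin k) (Fin k) ℚ)
    (hrank : (Matrix.fromRows B C).rank = n)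
    (d : Fin n → ℚ) (hd : ∀ i, 0 < d i)
    (hskew : (Matrix.diagonal d * B).transpose = -(Matrix.diagonal d * B))
    (M : Matrix (Fin n ⊕ Fin k) (Fin n ⊕ Fin k) ℚ)
    (hM : M = Matrix.fromCols (Matrix.fromRows B C) (Matrix.fromRows E F))
    (hMunit : IsUnit M.det)
    (Λ₀ : Matrix (Fin n ⊕ Fin k) (Fin n ⊕ Fin k) ℚ)
    (hΛ₀ : Λ₀ = M⁻¹.transpose *
        Matrix.fromBlocks (Matrix.diagonal d * B) (Matrix.diagonal d * E)
          (-(E.transpose * Matrix.diagonal d)) 0 * M⁻¹) :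
    Λ₀.transpose = -Λ₀ ∧
      (Matrix.fromRows B C).transpose * Λ₀ =
        Matrix.fromCols (Matrix.diagonal d) 0 :=
  quantisation_construction_general n k B C E F d hskew M hM hMunit Λ₀ hΛ₀
end

section
/- Let A be an (n+2)×n integer matrix and define the skew-symmetric (n+2)×(n+2) matrix M(A) = (m_{ij}) by m_{ij} = (−1)^{i+j} det(A_{R(i,j)}) for i < j, m_{ii} = 0, and m_{ij} = (−1)^{i+j+1} det(A_{R(i,j)}) for j < i, where R(i,j) ⊂ [n+2] is the complement of {i,j} and A_{R(i,j)} is the n×n submatrix of A with those rows. Then Aᵀ · M(A) = 0. -/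
/-!
Fix a column `j` of `M(A)` and delete row `j` of `A`, leaving an `(n+1) × n` matrix `B`.
For `i ≠ j` the entry `m i j` is, up to the common sign `(-1)^j`, the signed cofactor of row
`i` of `B`, so the `(k, j)` entry of `Aᵀ M(A)` is `±` the Laplace expansion along the first
column of the square matrix `[B_k | B]` obtained by putting a copy of column `k` of `B` in
front of `B`. That matrix has two equal columns, so its determinant vanishes.
-/

/-- The strictly monotone embedding `Fin n → Fin (n+2)` whose image is the
complement `R(i,j)` of `{i, j}` (for `i < j`). -/
def rowEmb {n : ℕ} (i j : Fin (n + 2)) (h : i < j) : Fin n → Fin (n + 2) :=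
  j.succAbove ∘ Fin.succAbove ⟨i.1, by have := j.2; have := Fin.lt_def.mp h; omega⟩

/-- The skew-symmetric matrix `M(A)` of signed maximal minors of an
`(n+2) × n` matrix `A`: `m i j = (-1)^(i+j) det (A_{R(i,j)})` for `i < j`,
`m i i = 0`, and `m i j = (-1)^(i+j+1) det (A_{R(i,j)})` for `j < i`. -/
def minorMatrix {n : ℕ} (A : Matrix (Fin (n + 2)) (Fin n) ℤ) :
    Matrix (Fin (n + 2)) (Fin (n + 2)) ℤ :=
  Matrix.of fun i j =>
    if h : i < j then (-1) ^ (i.1 + j.1) * (A.submatrix (rowEmb i j h) id).det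
    else if h' : j < i then (-1) ^ (i.1 + j.1 + 1) * (A.submatrix (rowEmb j i h') id).det
    else 0

namespace Matrix

variable {R : Type*} [CommRing R] {n : ℕ}

theorem sum_neg_one_pow_mul_det_submatrix_succAbove (B : Matrix (Fin (n + 1)) (Fin n) R)
    (v : Fin (n + 1) → R) :
    ∑ r : Fin (n + 1), (-1) ^ (r : ℕ) * v r * (B.submatrix r.succAbove id).det =
      (of fun r => Fin.cons (v r) (B r)).det := by
  rw [det_succ_column_zero]
  rfl

theorem sum_neg_one_pow_mul_col_mul_det_submatrix_succAbove (B : Matrix (Fin (n + 1)) (Fin n) R)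
    (k : Fin n) :
    ∑ r : Fin (n + 1), (-1) ^ (r : ℕ) * B r k * (B.submatrix r.succAbove id).det = 0 := by
  rw [sum_neg_one_pow_mul_det_submatrix_succAbove]
  exact det_zero_of_column_eq (Fin.succ_ne_zero k).symm fun r => rfl

end Matrix

open Matrix

theorem rowEmb_succ {n : ℕ} (j : Fin (n + 2)) (r : Fin (n + 1))
    (h : j < r.succ) : rowEmb j r.succ h = j.succAbove ∘ r.succAbove := by
  have hle : j ≤ r.castSucc := Fin.le_castSucc_iff.mpr h
  funext k
  rw [Function.comp_apply, ← Fin.succAbove_succAbove_succAbove_predAbove j r k,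
    Fin.succAbove_of_le_castSucc _ _ hle, Fin.predAbove_of_le_castSucc _ _ hle]
  rfl

theorem minorMatrix_succAbove_apply {n : ℕ} (A : Matrix (Fin (n + 2)) (Fin n) ℤ)
    (j : Fin (n + 2)) (r : Fin (n + 1)) :
    minorMatrix A (j.succAbove r) j =
      (-1) ^ (r + j : ℕ) * ((A.submatrix j.succAbove id).submatrix r.succAbove id).det := by
  rcases lt_or_ge r.castSucc j with h | h
  · rw [Fin.succAbove_of_castSucc_lt _ _ h]
    simp only [minorMatrix, of_apply, dif_pos h]
    rfl
  · have h' : j < r.succ := Fin.le_castSucc_iff.mp h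
    rw [Fin.succAbove_of_le_castSucc _ _ h]
    simp only [minorMatrix, of_apply, dif_neg (not_lt_of_gt h'), dif_pos h', rowEmb_succ j r h',
      Fin.val_succ, submatrix_submatrix, Function.id_comp]
    ring

theorem minorMatrix_apply_self {n : ℕ} (A : Matrix (Fin (n + 2)) (Fin n) ℤ) (j : Fin (n + 2)) :
    minorMatrix A j j = 0 := by
  simp [minorMatrix]

/-- For any `(n+2) × n` integer matrix `A`, the signed-minor matrix `M(A)`
satisfies `Aᵀ · M(A) = 0`. -/
theorem transpose_mul_minorMatrix (n : ℕ) (A : Matrix (Fin (n + 2)) (Fin n) ℤ) :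
    A.transpose * minorMatrix A = 0 := by
  ext k j
  set B := A.submatrix j.succAbove id
  calc (Aᵀ * minorMatrix A) k j
      = ∑ r : Fin (n + 1), A (j.succAbove r) k * minorMatrix A (j.succAbove r) j := by
        rw [mul_apply, Fin.sum_univ_succAbove _ j, minorMatrix_apply_self, mul_zero, zero_add]
        rfl
    _ = (-1) ^ (j : ℕ) *
          ∑ r : Fin (n + 1), (-1) ^ (r : ℕ) * B r k * (B.submatrix r.succAbove id).det := by
        rw [Finset.mul_sum]
        refine Finset.sum_congr rfl fun r _ => ?_
        rw [minorMatrix_succAbove_apply, pow_add]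
        dsimp only [B, submatrix_apply, id]
        ring
    _ = 0 := by rw [sum_neg_one_pow_mul_col_mul_det_submatrix_succAbove, mul_zero]
end

section
/- Let A be an m×n integer matrix of full rank n and F ⊆ [m] with |F| = n such that the n×n submatrix A_F is invertible. Then the enhanced solution matrices {𝔐_{E(i,j)} : i < j, i,j ∈ [m]\F} are linearly independent over ℚ; in particular there are at least C(m−n, 2) linearly independent skew-symmetric solutions Λ of AᵀΛ = 0. -/
/-- The enhanced solution matrix `𝔐_E(A)`: the `m × m` integer matrix whose
submatrix on rows and columns in `E` (of cardinality `n+2`) is the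
signed-minor matrix `M(A_E)` of the `(n+2) × n` submatrix `A_E` of `A` with
rows indexed by `E` in increasing order, all other entries being zero. -/
def enhancedMatrix {m n : ℕ} (A : Matrix (Fin m) (Fin n) ℤ) (E : Finset (Fin m)) :
    Matrix (Fin m) (Fin m) ℤ :=
  if hE : E.card = n + 2 then
    Matrix.of fun r s =>
      if hr : r ∈ E then
        if hs : s ∈ E then
          minorMatrix (A.submatrix (fun t => ((E.orderIsoOfFin hE t : Fin m))) id)
            ((E.orderIsoOfFin hE).symm ⟨r, hr⟩) ((E.orderIsoOfFin hE).symm ⟨s, hs⟩)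
        else 0
      else 0
  else 0

/-! For `i < j` outside `F`, the `(i, j)` entry of `𝔐_{E(i', j')}` is `± det A_F ≠ 0` when
`(i', j') = (i, j)` and `0` otherwise, since `i, j ∈ E(i', j')` forces `{i, j} = {i', j'}`.
Evaluating at these entries thus sends the family to nonzero multiples of distinct standard basis
vectors. -/

lemma linearIndependent_of_dual_apply_diag {R M ι : Type*} [Ring R] [IsDomain R]
    [AddCommGroup M] [Module R M] {v : ι → M} (φ : ι → M →ₗ[R] R)
    (h_off : ∀ i j, i ≠ j → φ i (v j) = 0) (h_diag : ∀ i, φ i (v i) ≠ 0) :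
    LinearIndependent R v := by
  classical
  have h_single : LinearMap.pi φ ∘ v = fun j => Pi.single j (φ j (v j)) := by
    ext j i
    obtain rfl | hij := eq_or_ne i j
    · simp
    · simp [hij, h_off i j hij]
  exact .of_comp (LinearMap.pi φ) (h_single ▸ Pi.linearIndependent_single_of_ne_zero h_diag)

lemma rowEmb_strictMono {n : ℕ} (i j : Fin (n + 2)) (h : i < j) :
    StrictMono (rowEmb i j h) :=
  (Fin.strictMono_succAbove j).comp (Fin.strictMono_succAbove _)

lemma rowEmb_ne_left {n : ℕ} (i j : Fin (n + 2)) (h : i < j) (t : Fin n) :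
    rowEmb i j h t ≠ i := by
  set i' : Fin (n + 1) := ⟨i.1, by have := j.2; have := Fin.lt_def.mp h; omega⟩
  have hi' : j.succAbove i' = i := by
    rw [Fin.succAbove_of_castSucc_lt _ _ h]
    rfl
  intro h_eq
  exact Fin.succAbove_ne i' t (Fin.succAbove_right_injective (h_eq.trans hi'.symm))

lemma rowEmb_ne_right {n : ℕ} (i j : Fin (n + 2)) (h : i < j) (t : Fin n) :
    rowEmb i j h t ≠ j :=
  Fin.succAbove_ne j _

lemma minorMatrix_apply_of_lt {n : ℕ} (A : Matrix (Fin (n + 2)) (Fin n) ℤ)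
    {i j : Fin (n + 2)} (h : i < j) :
    minorMatrix A i j = (-1) ^ (i.1 + j.1) * (A.submatrix (rowEmb i j h) id).det := by
  simp [minorMatrix, h]

section enhancedMatrix

variable {m n : ℕ} (A : Matrix (Fin m) (Fin n) ℤ) {E : Finset (Fin m)} {r s : Fin m}

lemma enhancedMatrix_apply (hE : E.card = n + 2) (hr : r ∈ E) (hs : s ∈ E) :
    enhancedMatrix A E r s =
      minorMatrix (A.submatrix (fun t => (E.orderIsoOfFin hE t : Fin m)) id)
        ((E.orderIsoOfFin hE).symm ⟨r, hr⟩) ((E.orderIsoOfFin hE).symm ⟨s, hs⟩) := by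
  simp [enhancedMatrix, hE, hr, hs]

lemma enhancedMatrix_apply_of_notMem_left (hr : r ∉ E) : enhancedMatrix A E r s = 0 := by
  unfold enhancedMatrix
  split_ifs <;> simp [hr]

lemma enhancedMatrix_apply_of_notMem_right (hs : s ∉ E) : enhancedMatrix A E r s = 0 := by
  unfold enhancedMatrix
  split_ifs <;> simp [hs]

lemma enhancedMatrix_insert_insert_apply_of_ne {F : Finset (Fin m)} {i j i' j' : Fin m}
    (hi : i ∉ F) (hj : j ∉ F) (hij : i < j) (hij' : i' < j') (hne : (i, j) ≠ (i', j')) :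
    enhancedMatrix A (insert i' (insert j' F)) i j = 0 := by
  by_cases hiE : i ∈ insert i' (insert j' F)
  · apply enhancedMatrix_apply_of_notMem_right
    simp only [Finset.mem_insert] at hiE ⊢
    grind
  · exact enhancedMatrix_apply_of_notMem_left A hiE

lemma enhancedMatrix_insert_insert_apply_self {F : Finset (Fin m)} (hF : F.card = n)
    {e : Fin n → Fin m} (he : StrictMono e) (heF : ∀ t, e t ∈ F) {i j : Fin m}
    (hi : i ∉ F) (hj : j ∉ F) (hij : i < j) :
    ∃ k : ℕ, enhancedMatrix A (insert i (insert j F)) i j = (-1) ^ k * (A.submatrix e id).det := by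
  set E := insert i (insert j F)
  have hiE : i ∈ E := Finset.mem_insert_self _ _
  have hjE : j ∈ E := Finset.mem_insert_of_mem (Finset.mem_insert_self _ _)
  have hE : E.card = n + 2 := by
    rw [Finset.card_insert_of_notMem (by simp [hij.ne, hi]), Finset.card_insert_of_notMem hj, hF]
  set σ := E.orderIsoOfFin hE
  have hlt : σ.symm ⟨i, hiE⟩ < σ.symm ⟨j, hjE⟩ := σ.symm.lt_iff_lt.mpr hij
  set ρ := rowEmb _ _ hlt
  -- Deleting the positions of `i` and `j` from the increasing enumeration of `E` leaves that of `F`.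
  have hρ : (fun t => (σ (ρ t) : Fin m)) = e := by
    have hmem : ∀ t, (σ (ρ t) : Fin m) ∈ F := by
      intro t
      have h_ne_i : (σ (ρ t) : Fin m) ≠ i := fun h =>
        rowEmb_ne_left _ _ hlt t (σ.eq_symm_apply.mpr (Subtype.ext h))
      have h_ne_j : (σ (ρ t) : Fin m) ≠ j := fun h =>
        rowEmb_ne_right _ _ hlt t (σ.eq_symm_apply.mpr (Subtype.ext h))
      exact ((Finset.mem_insert.mp (σ (ρ t)).2).resolve_left h_ne_i |> Finset.mem_insert.mp).resolve_left
        h_ne_j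
    have hmono : StrictMono fun t => (σ (ρ t) : Fin m) := fun a b hab =>
      σ.strictMono (rowEmb_strictMono _ _ hlt hab)
    exact (Finset.orderEmbOfFin_unique hF hmem hmono).trans
      (Finset.orderEmbOfFin_unique hF heF he).symm
  rw [enhancedMatrix_apply A hE hiE hjE, minorMatrix_apply_of_lt _ hlt, Matrix.submatrix_submatrix,
    ← hρ]
  exact ⟨_, rfl⟩

end enhancedMatrix

theorem enhancedMatrices_linearIndependent_general (m n : ℕ)
    (A : Matrix (Fin m) (Fin n) ℤ)
    (F : Finset (Fin m)) (hF : F.card = n)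
    (e : Fin n → Fin m) (he : StrictMono e) (heF : ∀ t, e t ∈ F)
    (hdet : (A.submatrix e id).det ≠ 0) :
    LinearIndependent ℚ
      (fun p : {p : Fin m × Fin m // p.1 ∉ F ∧ p.2 ∉ F ∧ p.1 < p.2} =>
        (enhancedMatrix A (insert p.1.1 (insert p.1.2 F))).map ((↑) : ℤ → ℚ)) ∧
    Nat.card {p : Fin m × Fin m // p.1 ∉ F ∧ p.2 ∉ F ∧ p.1 < p.2} =
      (m - n).choose 2 := by
  refine ⟨?_, ?_⟩
  · refine linearIndependent_of_dual_apply_diag (fun p => Matrix.entryLinearMap ℚ ℚ p.1.1 p.1.2)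
      (fun p q hpq => ?_) (fun p => ?_)
    · simp [enhancedMatrix_insert_insert_apply_of_ne A p.2.1 p.2.2.1 p.2.2.2 q.2.2.2
        (fun h => hpq (Subtype.ext h))]
    · obtain ⟨k, hk⟩ := enhancedMatrix_insert_insert_apply_self A hF he heF p.2.1 p.2.2.1 p.2.2.2
      simp [hk, hdet]
  · have h_pairs : ({p | p.1 ∉ F ∧ p.2 ∉ F ∧ p.1 < p.2} : Finset (Fin m × Fin m)) =
        {p ∈ Fᶜ ×ˢ Fᶜ | p.1 < p.2} := by
      ext
      simp [and_assoc]
    rw [Nat.card_eq_fintype_card, Fintype.card_subtype, h_pairs, Finset.card_product_filter_lt,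
      Finset.card_compl, hF, Fintype.card_fin]

/-- If `A` is an `m × n` integer matrix of full rank `n` and `F ⊆ [m]` with
`|F| = n` is such that the square submatrix `A_F` is invertible, then the
enhanced solution matrices `𝔐_{E(i,j)}` for pairs `i < j` outside `F` are
linearly independent over `ℚ`; in particular there are at least `C(m-n, 2)`
linearly independent skew-symmetric solutions of `Aᵀ Λ = 0`. -/
theorem enhancedMatrices_linearIndependent (m n : ℕ) (hmn : n + 2 < m)
    (A : Matrix (Fin m) (Fin n) ℤ)
    (hrank : (A.map ((↑) : ℤ → ℚ)).rank = n)
    (F : Finset (Fin m)) (hF : F.card = n)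
    (e : Fin n → Fin m) (he : StrictMono e) (heF : ∀ t, e t ∈ F)
    (hdet : (A.submatrix e id).det ≠ 0) :
    LinearIndependent ℚ
      (fun p : {p : Fin m × Fin m // p.1 ∉ F ∧ p.2 ∉ F ∧ p.1 < p.2} =>
        (enhancedMatrix A (insert p.1.1 (insert p.1.2 F))).map ((↑) : ℤ → ℚ)) ∧
    Nat.card {p : Fin m × Fin m // p.1 ∉ F ∧ p.2 ∉ F ∧ p.1 < p.2} =
      (m - n).choose 2 :=
  enhancedMatrices_linearIndependent_general m n A F hF e he heF hdet
end

section
/- Let B̃ be an m×n rational matrix of full rank n with m ≤ n+1 (i.e. at most one frozen index), with skew-symmetrisable principal part B and skew-symmetriser D. If Λ and Λ' are skew-symmetric m×m rational matrices with B̃ᵀΛ = [D 0] and B̃ᵀΛ' = [λD 0] for some λ ∈ ℚ, then Λ' = λΛ; i.e. the quantisation is unique up to scalar. -/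
/-- With at most one frozen index (`m ≤ n + 1`) and `B̃` of full rank `n`,
the quantisation is unique up to scalar: if `B̃ᵀ Λ = [D 0]` and
`B̃ᵀ Λ' = [λD 0]`, then `Λ' = λ Λ`. -/
theorem quantisation_unique_of_le_one_frozen (m n : ℕ) (hmn : n ≤ m)
    (hm : m ≤ n + 1)
    (Bt : Matrix (Fin m) (Fin n) ℚ) (hrank : Bt.rank = n)
    (d : Fin n → ℚ) (hd : ∀ i, 0 < d i)
    (hskew : ∀ i j : Fin n,
      d i * Bt (Fin.castLE hmn i) j = -(d j * Bt (Fin.castLE hmn j) i))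
    (Λ Λ' : Matrix (Fin m) (Fin m) ℚ)
    (hΛ : Λ.transpose = -Λ) (hΛ' : Λ'.transpose = -Λ')
    (lam : ℚ)
    (hcomp : ∀ (i : Fin n) (j : Fin m),
      (Bt.transpose * Λ) i j = if (j : ℕ) = (i : ℕ) then d i else 0)
    (hcomp' : ∀ (i : Fin n) (j : Fin m),
      (Bt.transpose * Λ') i j = if (j : ℕ) = (i : ℕ) then lam * d i else 0) :
    Λ' = lam • Λ := by
  set M : Matrix (Fin m) (Fin m) ℚ := Λ' - lam • Λ with hMdef
  have hM0 : Bt.transpose * M = 0 := by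
    ext i j
    have h1 := hcomp i j
    have h2 := hcomp' i j
    simp only [hMdef, Matrix.mul_sub, Matrix.mul_smul, Matrix.sub_apply, Matrix.smul_apply,
      Matrix.zero_apply, h1, h2, smul_eq_mul]
    split <;> ring
  have hMskew : ∀ i j, M j i = - M i j := by
    intro i j
    have h1 := congrFun (congrFun hΛ j) i
    have h2 := congrFun (congrFun hΛ' j) i
    simp only [Matrix.transpose_apply, Matrix.neg_apply] at h1 h2
    simp only [hMdef, Matrix.sub_apply, Matrix.smul_apply, smul_eq_mul, h1, h2]
    ring
  -- kernel of Bᵀ has dimension ≤ 1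
  set f : (Fin m → ℚ) →ₗ[ℚ] (Fin n → ℚ) := Matrix.mulVecLin Bt.transpose with hfdef
  have hker : Module.finrank ℚ (LinearMap.ker f) ≤ 1 := by
    have h1 := LinearMap.finrank_range_add_finrank_ker f
    have h2 : Module.finrank ℚ (LinearMap.range f) = n := by
      have ht := Bt.rank_transpose
      rw [hrank] at ht
      simpa [Matrix.rank, hfdef] using ht
    rw [h2, Module.finrank_fin_fun] at h1
    omega
  have hcol : ∀ j, (fun i => M i j) ∈ LinearMap.ker f := by
    intro j
    rw [LinearMap.mem_ker]
    funext i
    have := congrFun (congrFun hM0 i) j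
    simpa [hfdef, Matrix.mulVecLin_apply, Matrix.mulVec, Matrix.vecMul, dotProduct, Matrix.mul_apply, mul_comm]
      using this
  obtain ⟨v, hv⟩ := finrank_le_one_iff.mp hker
  choose c hc using fun j => hv ⟨fun i => M i j, hcol j⟩
  have hMc : ∀ i j, M i j = c j * (v : Fin m → ℚ) i := by
    intro i j
    have := congrArg (fun w : LinearMap.ker f => (w : Fin m → ℚ) i) (hc j)
    simpa using this.symm
  have hM0' : M = 0 := by
    ext i j
    rw [hMc i j]
    by_cases hvi : (v : Fin m → ℚ) i = 0
    · simp [hvi]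
    · have hii : c i * (v : Fin m → ℚ) i = 0 := by
        have := hMskew i i
        rw [hMc i i] at this
        linarith
      have hci : c i = 0 := by
        rcases mul_eq_zero.mp hii with h | h
        · exact h
        · exact absurd h hvi
      have := hMskew j i
      rw [hMc i j, hMc j i, hci] at this
      simpa using this.symm
  have : Λ' - lam • Λ = 0 := hM0'
  linear_combination (norm := abel) this
end

section
/- Let (B̃, Λ) be a compatible pair (B̃ᵀΛ = [D' 0]) and k ∈ [n] a mutable index with b-matrix entries b_{i,k}. Then for every j ∈ [m] with j ≠ k, the two exponent vectors a⁺ = −e_k + Σᵢ max(0, b_{i,k}) e_i and a⁻ = −e_k + Σᵢ max(0, −b_{i,k}) e_i satisfy β(a⁺, e_j) = β(a⁻, e_j), where β is the bilinear form given by Λ; i.e. both exchange monomials q-commute identically with every X_j. -/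
/-!
Since `max 0 x - max 0 (-x) = x`, the difference `a⁺ - a⁻` is the `k`-th column of `B̃`, and
`β(B̃ e_k, e_j)` is the `(k, j)` entry of `B̃ᵀΛ = [D' 0]`, which vanishes for `j ≠ k`.
-/

theorem sub_eq_of_eq_add_max_zero {ι α : Type*} [AddCommGroup α] [LinearOrder α]
    [IsOrderedAddMonoid α] {a a' c b : ι → α}
    (ha : ∀ i, a i = c i + max 0 (b i)) (ha' : ∀ i, a' i = c i + max 0 (-b i)) :
    a - a' = b :=
  funext fun i => by
    rw [Pi.sub_apply, ha, ha', add_sub_add_left_eq_sub, max_comm 0, max_comm 0,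
      max_zero_sub_max_neg_zero_eq_self]

open Matrix in
theorem Matrix.transpose_dotProduct_mulVec_single_one {l m n R : Type*} [Fintype l]
    [DecidableEq m] [Fintype m] [NonAssocSemiring R]
    (A : Matrix l n R) (Λ : Matrix l m R) (k : n) (j : m) :
    Aᵀ k ⬝ᵥ Λ *ᵥ Pi.single j 1 = (Aᵀ * Λ) k j := by
  rw [mulVec_single_one, mul_apply']
  rfl

theorem exchange_monomials_q_commute_general (m n : ℕ)
    (Bt : Matrix (Fin m) (Fin n) ℤ) (Λ : Matrix (Fin m) (Fin m) ℤ)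
    (d : Fin n → ℤ)
    (hcomp : ∀ (i : Fin n) (j : Fin m),
      (Bt.transpose * Λ) i j = if (j : ℕ) = (i : ℕ) then d i else 0)
    (k : Fin n)
    (aplus aminus : Fin m → ℤ)
    (haplus : ∀ i : Fin m,
      aplus i = (if (i : ℕ) = (k : ℕ) then -1 else 0) + max 0 (Bt i k))
    (haminus : ∀ i : Fin m,
      aminus i = (if (i : ℕ) = (k : ℕ) then -1 else 0) + max 0 (-Bt i k)) :
    ∀ j : Fin m, (j : ℕ) ≠ (k : ℕ) →
      dotProduct aplus (Λ.mulVec (Pi.single j 1)) =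
        dotProduct aminus (Λ.mulVec (Pi.single j 1)) := by
  intro j hj
  have hcol : aplus - aminus = Bt.transpose k := sub_eq_of_eq_add_max_zero haplus haminus
  rw [← sub_eq_zero, ← sub_dotProduct, hcol, Matrix.transpose_dotProduct_mulVec_single_one,
    hcomp, if_neg hj]

/-- For a compatible pair `(B̃, Λ)` and a mutable index `k`, the two exponent
vectors `a⁺ = -e_k + ∑ max(0, b_{i,k}) e_i` and `a⁻ = -e_k + ∑ max(0, -b_{i,k}) e_i`
of the exchange monomials satisfy `β(a⁺, e_j) = β(a⁻, e_j)` for every `j ≠ k`,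
where `β(a, b) = aᵀ Λ b`: both exchange monomials `q`-commute identically with
every `X_j`. -/
theorem exchange_monomials_q_commute (m n : ℕ) (hmn : n ≤ m)
    (Bt : Matrix (Fin m) (Fin n) ℤ) (Λ : Matrix (Fin m) (Fin m) ℤ)
    (hΛ : Λ.transpose = -Λ)
    (d : Fin n → ℤ) (hd : ∀ i, 0 < d i)
    (hcomp : ∀ (i : Fin n) (j : Fin m),
      (Bt.transpose * Λ) i j = if (j : ℕ) = (i : ℕ) then d i else 0)
    (k : Fin n)
    (aplus aminus : Fin m → ℤ)
    (haplus : ∀ i : Fin m,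
      aplus i = (if (i : ℕ) = (k : ℕ) then -1 else 0) + max 0 (Bt i k))
    (haminus : ∀ i : Fin m,
      aminus i = (if (i : ℕ) = (k : ℕ) then -1 else 0) + max 0 (-Bt i k)) :
    ∀ j : Fin m, (j : ℕ) ≠ (k : ℕ) →
      dotProduct aplus (Λ.mulVec (Pi.single j 1)) =
        dotProduct aminus (Λ.mulVec (Pi.single j 1)) :=
  exchange_monomials_q_commute_general m n Bt Λ d hcomp k aplus aminus haplus haminus
end
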